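/- arXiv:2604.06423 — 2 statements merged into one kernel-verified Lean document; each statement's English description precedes it below -/
import Mathlib

section
/- Let H and G be real Hilbert spaces, L : H → G a bounded linear operator, τ, σ > 0 and θ a real with 1+θ ≥ 0. If τσ‖L‖²(1+θ)² < 4, then there exists μ > 0 such that for all (x,y) ∈ H × G, (1/τ)‖x‖² + (1/σ)‖y‖² - (1+θ)⟨Lx, y⟩ ≥ μ(‖x‖² + ‖y‖²); i.e., the self-adjoint operator P = [[τ⁻¹I, -((1+θ)/2)L*], [-((1+θ)/2)L, σ⁻¹I]] is strongly positive. -/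
open scoped RealInnerProductSpace

set_option maxHeartbeats 800000

theorem stmt_6 {H G : Type*}
    [NormedAddCommGroup H] [InnerProductSpace ℝ H] [CompleteSpace H]
    [NormedAddCommGroup G] [InnerProductSpace ℝ G] [CompleteSpace G]
    (L : H →L[ℝ] G) (τ σ θ : ℝ) (hτ : 0 < τ) (hσ : 0 < σ) (hθ : 0 ≤ 1 + θ)
    (hstep : τ*σ*‖L‖^2*(1+θ)^2 < 4) :
    ∃ μ : ℝ, 0 < μ ∧ ∀ (x : H) (y : G),
      μ * (‖x‖^2 + ‖y‖^2) ≤ (1/τ) * ‖x‖^2 + (1/σ) * ‖y‖^2 - (1+θ) * ⟪L x, y⟫ := by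
  set c := (1+θ) * ‖L‖ with hc
  have hc0 : 0 ≤ c := mul_nonneg hθ (norm_nonneg L)
  have hkey : c^2 < 4 / (τ*σ) := by
    rw [lt_div_iff₀ (by positivity), hc]
    nlinarith [norm_nonneg L]
  set m := min (1/τ) (1/σ) with hm
  have hm0 : 0 < m := lt_min (by positivity) (by positivity)
  have hD : 0 < 1/τ + 1/σ := by positivity
  set ν := (1/(τ*σ) - c^2/4)/(1/τ+1/σ) with hν
  have hnum : 0 < 1/(τ*σ) - c^2/4 := by
    have : c^2 < 4 * (1/(τ*σ)) := by
      rw [div_eq_mul_inv] at hkey; rw [one_div]; linarith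
    linarith
  have hν0 : 0 < ν := div_pos hnum hD
  refine ⟨min (m/2) ν, lt_min (by positivity) hν0, fun x y => ?_⟩
  set μ := min (m/2) ν with hμ
  have hμm : μ ≤ m/2 := min_le_left _ _
  have hμν : μ ≤ ν := min_le_right _ _
  have hμ0 : 0 < μ := lt_min (by positivity) hν0
  have hA : m/2 ≤ 1/τ - μ := by
    have : m ≤ 1/τ := min_le_left _ _
    linarith
  have hB : m/2 ≤ 1/σ - μ := by
    have : m ≤ 1/σ := min_le_right _ _
    linarith
  have h1 : μ * (1/τ + 1/σ) ≤ 1/(τ*σ) - c^2/4 := by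
    rw [hν, le_div_iff₀ hD] at hμν
    linarith
  have hts : (1/τ)*(1/σ) = 1/(τ*σ) := by field_simp
  have hAB : c^2 ≤ 4 * ((1/τ - μ) * (1/σ - μ)) := by
    nlinarith [sq_nonneg μ]
  have hinner : (1+θ) * ⟪L x, y⟫ ≤ c * (‖x‖ * ‖y‖) := by
    have h1 : ⟪L x, y⟫ ≤ ‖L x‖ * ‖y‖ := real_inner_le_norm _ _
    have h2 : ‖L x‖ ≤ ‖L‖ * ‖x‖ := L.le_opNorm x
    have h3 : (1+θ) * ⟪L x, y⟫ ≤ (1+θ) * (‖L‖ * ‖x‖ * ‖y‖) := by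
      apply mul_le_mul_of_nonneg_left _ hθ
      calc ⟪L x, y⟫ ≤ ‖L x‖ * ‖y‖ := h1
        _ ≤ ‖L‖ * ‖x‖ * ‖y‖ := by nlinarith [norm_nonneg y, norm_nonneg L]
    rw [hc]
    nlinarith [h3]
  have hquad : 0 ≤ (1/τ - μ) * ‖x‖^2 + (1/σ - μ) * ‖y‖^2 - c * (‖x‖ * ‖y‖) := by
    have h4A : (0:ℝ) < 4*(1/τ-μ) := by linarith
    have hrhs : 0 ≤ (2*(1/τ-μ)*‖x‖ - c*‖y‖)^2 + (4*((1/τ-μ)*(1/σ-μ)) - c^2)*‖y‖^2 :=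
      add_nonneg (sq_nonneg _) (mul_nonneg (by linarith) (sq_nonneg _))
    have hmul : 4*(1/τ-μ)*((1/τ-μ)*‖x‖^2 + (1/σ-μ)*‖y‖^2 - c*(‖x‖*‖y‖)) =
        (2*(1/τ-μ)*‖x‖ - c*‖y‖)^2 + (4*((1/τ-μ)*(1/σ-μ)) - c^2)*‖y‖^2 := by ring
    rw [← hmul] at hrhs
    nlinarith [hrhs, h4A]
  linarith
end

section
/- Let σ, τ > 0, 0 < θ ≤ 1, and c := √(τσ)‖L‖ ≥ 0 with στ‖L‖² ≤ 4θ(2-θ)/(1 - 2θ + 9θ² - 4θ³). Define α± = (1 ± cθ(1-θ))/2, β± = (2(1-θ) ± (1+θ)c)/4, γ± = (1 ± c(1-θ))/2. Then α± > 0 and the quantities η± := γ± - β±²/α± satisfy η± = (4θ(2-θ) - c²(1 - 2θ + 9θ² - 4θ³)) / (8(1 ± cθ(1-θ))) ≥ 0, with strict inequality when the step-size condition is strict. -/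
theorem stmt_14 (σ τ θ normL c : ℝ) (hσ : 0 < σ) (hτ : 0 < τ)
    (hθ0 : 0 < θ) (hθ1 : θ ≤ 1) (hL : 0 ≤ normL)
    (hc : c = Real.sqrt (τ*σ) * normL)
    (hstep : σ*τ*normL^2 ≤ 4*θ*(2-θ) / (1 - 2*θ + 9*θ^2 - 4*θ^3)) :
    (0 < (1 + c*θ*(1-θ))/2 ∧ 0 < (1 - c*θ*(1-θ))/2) ∧
    ((1 + c*(1-θ))/2 - ((2*(1-θ) + (1+θ)*c)/4)^2 / ((1 + c*θ*(1-θ))/2)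
        = (4*θ*(2-θ) - c^2*(1 - 2*θ + 9*θ^2 - 4*θ^3)) / (8*(1 + c*θ*(1-θ)))) ∧
    ((1 - c*(1-θ))/2 - ((2*(1-θ) - (1+θ)*c)/4)^2 / ((1 - c*θ*(1-θ))/2)
        = (4*θ*(2-θ) - c^2*(1 - 2*θ + 9*θ^2 - 4*θ^3)) / (8*(1 - c*θ*(1-θ)))) ∧
    (0 ≤ (4*θ*(2-θ) - c^2*(1 - 2*θ + 9*θ^2 - 4*θ^3)) / (8*(1 + c*θ*(1-θ))) ∧
     0 ≤ (4*θ*(2-θ) - c^2*(1 - 2*θ + 9*θ^2 - 4*θ^3)) / (8*(1 - c*θ*(1-θ)))) ∧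
    (σ*τ*normL^2 < 4*θ*(2-θ) / (1 - 2*θ + 9*θ^2 - 4*θ^3) →
      0 < (4*θ*(2-θ) - c^2*(1 - 2*θ + 9*θ^2 - 4*θ^3)) / (8*(1 + c*θ*(1-θ))) ∧
      0 < (4*θ*(2-θ) - c^2*(1 - 2*θ + 9*θ^2 - 4*θ^3)) / (8*(1 - c*θ*(1-θ)))) := by
  have hc0 : 0 ≤ c := by
    rw [hc]
    exact mul_nonneg (Real.sqrt_nonneg _) hL
  have hc2 : c^2 = σ*τ*normL^2 := by
    rw [hc, mul_pow, Real.sq_sqrt (by positivity : (0:ℝ) ≤ τ*σ)]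
    ring
  have hD : 0 < 1 - 2*θ + 9*θ^2 - 4*θ^3 := by nlinarith [sq_nonneg (5*θ-1), sq_nonneg θ]
  have hN : 0 ≤ 4*θ*(2-θ) - c^2*(1 - 2*θ + 9*θ^2 - 4*θ^3) := by
    have := (le_div_iff₀ hD).mp hstep
    nlinarith [this]
  have hθ1' : 0 ≤ 1 - θ := by linarith
  have hsq : (c*θ*(1-θ))^2 < 1 := by
    nlinarith [hN, hc2, sq_nonneg (c*θ*(1-θ)), mul_pos hθ0 hθ0, sq_nonneg c,
      mul_nonneg (mul_nonneg hc0 hθ0.le) hθ1', sq_nonneg (θ*(1-θ)), sq_nonneg (1-θ),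
      mul_nonneg (mul_nonneg hθ0.le hθ0.le) hθ0.le, sq_nonneg (c*(1-θ))]
  have hcb : c*θ*(1-θ) < 1 := by
    nlinarith [hsq, mul_nonneg (mul_nonneg hc0 hθ0.le) hθ1']
  have hA : 0 < 1 + c*θ*(1-θ) := by
    have := mul_nonneg (mul_nonneg hc0 hθ0.le) hθ1'
    linarith
  have hA' : 0 < 1 - c*θ*(1-θ) := by linarith
  refine ⟨⟨by linarith, by linarith⟩, ?_, ?_, ⟨?_, ?_⟩, ?_⟩
  · field_simp
    ring
  · field_simp
    ring
  · exact div_nonneg hN (by linarith)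
  · exact div_nonneg hN (by linarith)
  · intro hlt
    have hN' : 0 < 4*θ*(2-θ) - c^2*(1 - 2*θ + 9*θ^2 - 4*θ^3) := by
      have := (lt_div_iff₀ hD).mp hlt
      nlinarith [this]
    exact ⟨div_pos hN' (by linarith), div_pos hN' (by linarith)⟩
end
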